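/- arXiv:2604.17339 — 2 statements merged into one kernel-verified Lean document; each statement's English description precedes it below -/
import Mathlib

section
/- Adjacent-pair case of the proof of Theorem 2: let m ≥ 5 and r ∈ ZMod m. For every fault pattern F with w(F) ≤ 2 whose observed syndrome has supp s(F) = {r−1, r}, flipping data bit 2r+1 leaves a residual error of weight at most w(F); that is, wt(e(F) + 1_{2r+1}) ≤ w(F), where 1_{2r+1} is the indicator vector of the single data position 2r+1. -/
open scoped Classical

namespace CutCat

/-- A fault in the cut-cat single-round fault model, located at cat qubit `r`. -/
inductive Fault (m : ℕ) where
  | pre  (r : ZMod m)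
  | mid  (r : ZMod m)
  | post (r : ZMod m)
  | meas (r : ZMod m)

variable {m : ℕ}

/-- The index (in `ZMod (2*m)`) of the data qubit `2r` coupled to cat qubit `r`. -/
def d0 (r : ZMod m) : ZMod (2 * m) := 2 * (r.val : ZMod (2 * m))

/-- The data-qubit error contributed by a single fault. -/
def Fault.dataErr : Fault m → ZMod (2 * m) → ZMod 2
  | .pre r  => fun q => (if q = d0 r then 1 else 0) + (if q = d0 r + 1 then 1 else 0)
  | .mid r  => fun q => if q = d0 r + 1 then 1 else 0
  | .post _ => 0
  | .meas _ => 0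

/-- The cat-stabilizer syndrome contribution of a single fault
    (syndrome bit `j` checks cat qubits `j` and `j+1`). -/
def Fault.syn : Fault m → ZMod m → ZMod 2
  | .pre r  => fun j => (if j = r - 1 then 1 else 0) + (if j = r then 1 else 0)
  | .mid r  => fun j => (if j = r - 1 then 1 else 0) + (if j = r then 1 else 0)
  | .post r => fun j => (if j = r - 1 then 1 else 0) + (if j = r then 1 else 0)
  | .meas r => fun j => if j = r then 1 else 0

/-- The data error `e(F)` of a fault pattern `F` (coordinatewise mod-2 sum). -/
def dataErr (F : Multiset (Fault m)) : ZMod (2 * m) → ZMod 2 :=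
  (F.map Fault.dataErr).sum

/-- The observed syndrome `s(F)` of a fault pattern `F` (coordinatewise mod-2 sum). -/
def synd (F : Multiset (Fault m)) : ZMod m → ZMod 2 :=
  (F.map Fault.syn).sum

/-- Hamming weight of a binary vector. -/
noncomputable def wt {n : ℕ} (f : ZMod n → ZMod 2) : ℕ := {i | f i ≠ 0}.ncard

/-- The set of triggered syndrome bits, `supp s(F)`. -/
def suppSyn (F : Multiset (Fault m)) : Set (ZMod m) := {j | synd F j = 1}

/-- Boundary of a set of cat qubits: checks `j` with exactly one of `j`, `j+1` in `E`. -/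
def boundary (E : Set (ZMod m)) : Set (ZMod m) := {j | Xor' (j ∈ E) (j + 1 ∈ E)}

/-- Indicator (as a binary data vector) of the set `{2r+1 : r ∈ E}`. -/
noncomputable def indicOdd (E : Set (ZMod m)) : ZMod (2 * m) → ZMod 2 :=
  fun q => if ∃ r ∈ E, q = d0 r + 1 then 1 else 0

/-- Indicator of a single data position `j`. -/
def indic {n : ℕ} (j : ZMod n) : ZMod n → ZMod 2 := fun q => if q = j then 1 else 0

/-- `c` is the correction output by the minimum-weight decoder with parameter `t`
    on syndrome `s(F)`: if there is a set `E` of at most `t` cat qubits whose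
    boundary equals `supp s(F)`, then `c` is the indicator of `{2r+1 : r ∈ E}`;
    otherwise `c = 0`. -/
def IsDecoderCorrection (t : ℕ) (F : Multiset (Fault m)) (c : ZMod (2 * m) → ZMod 2) : Prop :=
  (∃ E : Set (ZMod m), E.ncard ≤ t ∧ boundary E = suppSyn F ∧ c = indicOdd E) ∨
  ((¬ ∃ E : Set (ZMod m), E.ncard ≤ t ∧ boundary E = suppSyn F) ∧ c = 0)

/-- `true` iff the fault is a measurement fault. -/
def Fault.isMeas : Fault m → Bool
  | .meas _ => true
  | _ => false

end CutCat

/-! A non-measurement fault at `a` produces the syndrome of an X error on cat qubit `a`, the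
coboundary `j ↦ φ j + φ (j + 1)` of the indicator of `a`; a measurement fault flips one bit.
Coboundaries have even total weight, so a pattern with syndrome `{r - 1, r}` contains an even
number of measurement faults. A cocycle on the cycle `ZMod m` that vanishes at one point vanishes
everywhere; as the sums of at most three indicators that occur here are supported on fewer than
`m` points, a single fault must be a non-measurement fault at `r`, and two non-measurement faults
are impossible. This leaves `pre r`, `mid r`, `post r` and pairs of measurement faults, whose
residual errors are `1_{2r}`, `0`, `1_{2r+1}` and `1_{2r+1}`. -/

namespace CutCat

variable {m : ℕ}

lemma eq_of_eq_one_iff_eq_one {x y : ZMod 2} (h : x = 1 ↔ y = 1) : x = y := by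
  revert x y; decide

section Indicator

variable {n : ℕ}

lemma indic_add_self (a : ZMod n) : indic a + indic a = 0 :=
  CharTwo.add_self_eq_zero _

lemma sum_indic [NeZero n] (a : ZMod n) : ∑ j, indic a j = 1 := by
  simp [indic]

lemma wt_zero : wt (0 : ZMod n → ZMod 2) = 0 := by
  simp [wt]

lemma wt_indic (a : ZMod n) : wt (indic a) = 1 := by
  have h : {i : ZMod n | indic a i ≠ 0} = {a} := by
    ext i; by_cases h : i = a <;> simp [indic, h]
  rw [wt, h, Set.ncard_singleton]

end Indicator

section Coboundary

/-- The syndrome of the X errors `φ` on the cat qubits. -/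
def coboundary (φ : ZMod m → ZMod 2) : ZMod m → ZMod 2 := fun j => φ j + φ (j + 1)

lemma coboundary_add (φ ψ : ZMod m → ZMod 2) :
    coboundary (φ + ψ) = coboundary φ + coboundary ψ := by
  funext j
  simp only [coboundary, Pi.add_apply]
  ring

lemma sum_coboundary [NeZero m] (φ : ZMod m → ZMod 2) : ∑ j, coboundary φ j = 0 := by
  simp only [coboundary, Finset.sum_add_distrib]
  rw [Fintype.sum_equiv (Equiv.addRight 1) (fun j => φ (j + 1)) φ fun _ => rfl]
  exact CharTwo.add_self_eq_zero _

lemma coboundary_indic_eq_one_iff [Fact (1 < m)] (r j : ZMod m) :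
    coboundary (indic r) j = 1 ↔ j = r - 1 ∨ j = r := by
  have hne : r - 1 ≠ r := fun h => one_ne_zero (by linear_combination -h : (1 : ZMod m) = 0)
  simp only [coboundary, indic, ← eq_sub_iff_add_eq]
  by_cases hj : j = r
  · subst hj; simp [hne.symm]
  · by_cases hj' : j = r - 1 <;> simp [hj, hj']

lemma apply_eq_of_coboundary_eq_zero [NeZero m] {φ : ZMod m → ZMod 2} (h : coboundary φ = 0)
    (i j : ZMod m) : φ i = φ j := by
  have step (k : ZMod m) : φ (k + 1) = φ k := (CharTwo.add_eq_zero.mp (congrFun h k)).symm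
  have shift (k : ℕ) : φ (j + k) = φ j := by
    induction k with
    | zero => simp
    | succ k ih => rw [Nat.cast_succ, ← add_assoc, step, ih]
  simpa using shift (i - j).val

lemma eq_zero_of_coboundary_eq_zero [NeZero m] {φ : ZMod m → ZMod 2} (h : coboundary φ = 0)
    (s : Finset (ZMod m)) (hs : s.card < m) (hφ : ∀ j ∉ s, φ j = 0) : φ = 0 := by
  obtain ⟨j₀, -, hj₀⟩ := Finset.exists_mem_notMem_of_card_lt_card
    (s := s) (t := Finset.univ) (by rwa [Finset.card_univ, ZMod.card])
  exact funext fun j => (apply_eq_of_coboundary_eq_zero h j j₀).trans (hφ j₀ hj₀)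

end Coboundary

lemma synd_eq_coboundary_indic [Fact (1 < m)] {F : Multiset (Fault m)} {r : ZMod m}
    (hs : suppSyn F = {r - 1, r}) : synd F = coboundary (indic r) :=
  funext fun j => eq_of_eq_one_iff_eq_one <| by
    rw [coboundary_indic_eq_one_iff]; exact Set.ext_iff.mp hs j

namespace Fault

/-- The cat qubit (for `meas`, the syndrome bit) at which the fault occurs. -/
def loc : Fault m → ZMod m
  | .pre r | .mid r | .post r | .meas r => r

lemma syn_of_isMeas : ∀ {f : Fault m}, f.isMeas → f.syn = indic f.loc
  | .meas _, _ => rfl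

lemma syn_of_not_isMeas {f : Fault m} (hf : ¬ f.isMeas) :
    f.syn = coboundary (indic f.loc) := by
  have key (r j : ZMod m) : (if j = r - 1 then (1 : ZMod 2) else 0) + (if j = r then 1 else 0) =
      coboundary (indic r) j := by
    simp only [coboundary, indic, ← eq_sub_iff_add_eq, add_comm]
  cases f <;> first | exact absurd rfl hf | exact funext (key _)

lemma sum_syn [NeZero m] (f : Fault m) : ∑ j, f.syn j = if f.isMeas then 1 else 0 := by
  by_cases hf : f.isMeas
  · rw [syn_of_isMeas hf, sum_indic, if_pos hf]
  · rw [syn_of_not_isMeas hf, sum_coboundary, if_neg hf]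

lemma dataErr_of_isMeas : ∀ {f : Fault m}, f.isMeas → f.dataErr = 0
  | .meas _, _ => rfl

lemma wt_dataErr_add_indic_le_one {f : Fault m} (hf : ¬ f.isMeas) :
    wt (f.dataErr + indic (d0 f.loc + 1)) ≤ 1 := by
  cases f with
  | pre r =>
    rw [show (pre r).loc = r from rfl,
      show (pre r).dataErr = indic (d0 r) + indic (d0 r + 1) from rfl, add_assoc,
      indic_add_self, add_zero, wt_indic]
  | mid r =>
    rw [show (mid r).loc = r from rfl, show (mid r).dataErr = indic (d0 r + 1) from rfl,
      indic_add_self, wt_zero]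
    exact zero_le_one
  | post r => rw [show (post r).dataErr = 0 from rfl, zero_add, wt_indic]
  | meas r => exact absurd rfl hf

variable [NeZero m] {r : ZMod m}

lemma not_isMeas_and_loc_eq_of_syn_eq (hm : 3 ≤ m) {f : Fault m}
    (h : f.syn = coboundary (indic r)) : ¬ f.isMeas ∧ f.loc = r := by
  have hf : ¬ f.isMeas := by
    intro hf
    have hsum := congrArg (fun φ => ∑ j, φ j) h
    simp only [sum_syn, if_pos hf, sum_coboundary] at hsum
    exact one_ne_zero hsum
  refine ⟨hf, ?_⟩
  rw [syn_of_not_isMeas hf] at h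
  have hzero : indic f.loc + indic r = 0 :=
    eq_zero_of_coboundary_eq_zero (by rw [coboundary_add, h, CharTwo.add_self_eq_zero])
      {f.loc, r} (Finset.card_le_two.trans_lt (by omega)) fun j hj => by simp_all [indic]
  by_contra hne
  simpa [indic, hne] using congrFun hzero f.loc

lemma isMeas_and_isMeas_of_syn_add_syn (hm : 4 ≤ m) {f g : Fault m}
    (h : f.syn + g.syn = coboundary (indic r)) : f.isMeas ∧ g.isMeas := by
  have hpar : f.isMeas = g.isMeas := by
    have hsum := congrArg (fun φ => ∑ j, φ j) h
    simp only [Pi.add_apply, Finset.sum_add_distrib, sum_syn, sum_coboundary] at hsum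
    revert hsum; cases f.isMeas <;> cases g.isMeas <;> decide
  suffices hf : f.isMeas from ⟨hf, hpar ▸ hf⟩
  by_contra hf
  have hg : ¬ g.isMeas := hpar ▸ hf
  rw [syn_of_not_isMeas hf, syn_of_not_isMeas hg, ← coboundary_add] at h
  have hzero : indic f.loc + indic g.loc + indic r = 0 :=
    eq_zero_of_coboundary_eq_zero (by rw [coboundary_add, h, CharTwo.add_self_eq_zero])
      {f.loc, g.loc, r} (Finset.card_le_three.trans_lt (by omega)) fun j hj => by simp_all [indic]
  have hsum := congrArg (fun φ => ∑ j, φ j) hzero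
  simp only [Pi.add_apply, Pi.zero_apply, Finset.sum_add_distrib, sum_indic,
    Finset.sum_const_zero] at hsum
  exact absurd hsum (by decide)

end Fault

end CutCat

/-- Adjacent-pair case of the proof of Theorem 2: if `w(F) ≤ 2` and the
triggered stabilizers are exactly `{r-1, r}`, then flipping data bit `2r+1`
leaves a residual error of weight at most `w(F)`. -/
theorem cutcat_d5_adjacent_pair (m : ℕ) (hm : 5 ≤ m) (r : ZMod m)
    (F : Multiset (CutCat.Fault m)) (hF : Multiset.card F ≤ 2)
    (hs : CutCat.suppSyn F = {r - 1, r}) :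
    CutCat.wt (CutCat.dataErr F + CutCat.indic (CutCat.d0 r + 1)) ≤ Multiset.card F := by
  have : NeZero m := ⟨by omega⟩
  have : Fact (1 < m) := ⟨by omega⟩
  have hsyn := CutCat.synd_eq_coboundary_indic hs
  obtain hF0 | hF1 | hF2 : F.card = 0 ∨ F.card = 1 ∨ F.card = 2 := by omega
  · have hr := (CutCat.coboundary_indic_eq_one_iff r r).mpr (Or.inr rfl)
    simp [← hsyn, Multiset.card_eq_zero.mp hF0, CutCat.synd] at hr
  · obtain ⟨f, rfl⟩ := Multiset.card_eq_one.mp hF1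
    simp only [CutCat.synd, CutCat.dataErr, Multiset.map_singleton, Multiset.sum_singleton]
      at hsyn ⊢
    obtain ⟨hf, rfl⟩ := CutCat.Fault.not_isMeas_and_loc_eq_of_syn_eq (by omega) hsyn
    exact CutCat.Fault.wt_dataErr_add_indic_le_one hf
  · obtain ⟨f, g, rfl⟩ := Multiset.card_eq_two.mp hF2
    simp only [CutCat.synd, CutCat.dataErr, Multiset.insert_eq_cons, Multiset.map_cons,
      Multiset.map_singleton, Multiset.sum_cons, Multiset.sum_singleton] at hsyn ⊢
    obtain ⟨hf, hg⟩ := CutCat.Fault.isMeas_and_isMeas_of_syn_add_syn (by omega) hsyn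
    rw [CutCat.Fault.dataErr_of_isMeas hf, CutCat.Fault.dataErr_of_isMeas hg, zero_add, zero_add,
      CutCat.wt_indic]
    exact one_le_two
end

section
/- Four-triggered-stabilizers case of the proof of Theorem 2: let m ≥ 5 and let r, u ∈ ZMod m be such that the four positions r−1, r, u−1, u are pairwise distinct. For every fault pattern F with w(F) ≤ 2 whose observed syndrome has supp s(F) = {r−1, r, u−1, u}, flipping data bits 2r+1 and 2u+1 leaves a residual error of weight at most w(F); that is, wt(e(F) + 1_{2r+1} + 1_{2u+1}) ≤ w(F), where 1_{j} denotes the indicator vector of the single data position j. -/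
open scoped Classical

namespace CutCat

variable {m : ℕ}

lemma pigeon3 {α : Type*} {j1 j2 j3 c d : α} (h12 : j1 ≠ j2) (h13 : j1 ≠ j3) (h23 : j2 ≠ j3)
    (H1 : j1 = c ∨ j1 = d) (H2 : j2 = c ∨ j2 = d) (H3 : j3 = c ∨ j3 = d) : False := by
  rcases H1 with rfl|rfl <;> rcases H2 with h|h <;> rcases H3 with h'|h' <;> simp_all

lemma pigeon4 {α : Type*} {j1 j2 j3 j4 a c d : α}
    (h12 : j1 ≠ j2) (h13 : j1 ≠ j3) (h14 : j1 ≠ j4) (h23 : j2 ≠ j3) (h24 : j2 ≠ j4) (h34 : j3 ≠ j4)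
    (H1 : j1 = a ∨ j1 = c ∨ j1 = d) (H2 : j2 = a ∨ j2 = c ∨ j2 = d)
    (H3 : j3 = a ∨ j3 = c ∨ j3 = d) (H4 : j4 = a ∨ j4 = c ∨ j4 = d) : False := by
  rcases H1 with rfl|rfl|rfl <;> rcases H2 with h|h|h <;> rcases H3 with h'|h'|h' <;>
    rcases H4 with h''|h''|h'' <;> simp_all

set_option linter.unreachableTactic false in
set_option linter.unusedTactic false in
lemma keyNonMeas (r u a b : ZMod m)
    (h1 : (1:ZMod m) ≠ 0) (h2 : (2:ZMod m) ≠ 0) (h3 : (3:ZMod m) ≠ 0) (h4 : (4:ZMod m) ≠ 0)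
    (d1 : r - 1 ≠ r) (d2 : r - 1 ≠ u - 1) (d3 : r - 1 ≠ u)
    (d4 : r ≠ u - 1) (d5 : r ≠ u) (d6 : u - 1 ≠ u)
    (Hr1 : Xor' (r - 1 = a - 1 ∨ r - 1 = a) (r - 1 = b - 1 ∨ r - 1 = b))
    (Hr : Xor' (r = a - 1 ∨ r = a) (r = b - 1 ∨ r = b))
    (Hu1 : Xor' (u - 1 = a - 1 ∨ u - 1 = a) (u - 1 = b - 1 ∨ u - 1 = b))
    (Hu : Xor' (u = a - 1 ∨ u = a) (u = b - 1 ∨ u = b)) :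
    (a = r ∧ b = u) ∨ (a = u ∧ b = r) := by
  by_cases har : a = r
  · subst har
    left; refine ⟨rfl, ?_⟩
    have hu1R : u - 1 = b - 1 ∨ u - 1 = b := by
      rcases Hu1 with ⟨hL, -⟩ | ⟨hR, -⟩
      · rcases hL with h|h
        · exact absurd h.symm d2
        · exact absurd h.symm d4
      · exact hR
    have huR : u = b - 1 ∨ u = b := by
      rcases Hu with ⟨hL, -⟩ | ⟨hR, -⟩
      · rcases hL with h|h
        · exact absurd h.symm d3
        · exact absurd h.symm d5
      · exact hR
    rcases hu1R with h|h
    · first | linear_combination h | linear_combination -h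
    · rcases huR with h'|h'
      · exact absurd (show (2:ZMod m) = 0 by first | linear_combination h - h' | linear_combination h' - h) h2
      · exact absurd (h.trans h'.symm) d6
  by_cases hau : a = u
  · subst hau
    right; refine ⟨rfl, ?_⟩
    have hr1R : r - 1 = b - 1 ∨ r - 1 = b := by
      rcases Hr1 with ⟨hL, -⟩ | ⟨hR, -⟩
      · rcases hL with h|h
        · exact absurd h d2
        · exact absurd h d3
      · exact hR
    have hrR : r = b - 1 ∨ r = b := by
      rcases Hr with ⟨hL, -⟩ | ⟨hR, -⟩
      · rcases hL with h|h
        · exact absurd h d4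
        · exact absurd h d5
      · exact hR
    rcases hr1R with h|h
    · first | linear_combination h | linear_combination -h
    · rcases hrR with h'|h'
      · exact absurd (show (2:ZMod m) = 0 by first | linear_combination h - h' | linear_combination h' - h) h2
      · exact absurd (h.trans h'.symm) d1
  exfalso
  by_cases hbr : b = r
  · subst hbr
    have hu1L : u - 1 = a - 1 ∨ u - 1 = a := by
      rcases Hu1 with ⟨hL, -⟩ | ⟨hR, -⟩
      · exact hL
      · rcases hR with h|h
        · exact absurd h.symm d2
        · exact absurd h.symm d4
    have huL : u = a - 1 ∨ u = a := by
      rcases Hu with ⟨hL, -⟩ | ⟨hR, -⟩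
      · exact hL
      · rcases hR with h|h
        · exact absurd h.symm d3
        · exact absurd h.symm d5
    have ha' : a = u + 1 := by
      rcases huL with h|h
      · first | linear_combination h | linear_combination -h
      · exact absurd h.symm hau
    subst ha'
    rcases hu1L with h|h
    · exact h1 (by first | linear_combination h | linear_combination -h)
    · exact h2 (by first | linear_combination h | linear_combination -h)
  by_cases hbu : b = u
  · subst hbu
    have hr1L : r - 1 = a - 1 ∨ r - 1 = a := by
      rcases Hr1 with ⟨hL, -⟩ | ⟨hR, -⟩
      · exact hL
      · rcases hR with h|h
        · exact absurd h d2
        · exact absurd h d3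
    have hrL : r = a - 1 ∨ r = a := by
      rcases Hr with ⟨hL, -⟩ | ⟨hR, -⟩
      · exact hL
      · rcases hR with h|h
        · exact absurd h d4
        · exact absurd h d5
    have ha' : a = r - 1 := by
      rcases hr1L with h|h
      · exact absurd (show a = r by first | linear_combination h | linear_combination -h) har
      · exact h.symm
    subst ha'
    rcases hrL with h|h
    · exact h2 (by first | linear_combination h | linear_combination -h)
    · exact h1 (by first | linear_combination h | linear_combination -h)
  rcases Hr with ⟨hL, -⟩ | ⟨hR, -⟩
  · have ha' : a = r + 1 := by
      rcases hL with h|h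
      · first | linear_combination h | linear_combination -h
      · exact absurd h.symm har
    subst ha'
    have hb' : b = r - 1 := by
      rcases Hr1 with ⟨hL1, -⟩ | ⟨hR1, -⟩
      · rcases hL1 with h|h
        · exact absurd (show r - 1 = r by first | linear_combination h | linear_combination -h) d1
        · exact absurd (show (2:ZMod m) = 0 by first | linear_combination h | linear_combination -h) h2
      · rcases hR1 with h|h
        · exact absurd (show b = r by first | linear_combination h | linear_combination -h) hbr
        · exact h.symm
    subst hb'
    have hu' : u = r - 2 := by
      rcases Hu with ⟨hL2, -⟩ | ⟨hR2, -⟩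
      · rcases hL2 with h|h
        · exact absurd (show r = u by first | linear_combination h | linear_combination -h) d5
        · exact absurd (show r = u - 1 by first | linear_combination h | linear_combination -h) d4
      · rcases hR2 with h|h
        · first | linear_combination h | linear_combination -h
        · exact absurd (show r - 1 = u by first | linear_combination h | linear_combination -h) d3
    subst hu'
    rcases Hu1 with ⟨hL3, -⟩ | ⟨hR3, -⟩
    · rcases hL3 with h|h
      · exact h3 (by first | linear_combination h | linear_combination -h)
      · exact h4 (by first | linear_combination h | linear_combination -h)
    · rcases hR3 with h|h
      · exact h1 (by first | linear_combination h | linear_combination -h)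
      · exact h2 (by first | linear_combination h | linear_combination -h)
  · have hb' : b = r + 1 := by
      rcases hR with h|h
      · first | linear_combination h | linear_combination -h
      · exact absurd h.symm hbr
    subst hb'
    have ha' : a = r - 1 := by
      rcases Hr1 with ⟨hL1, -⟩ | ⟨hR1, -⟩
      · rcases hL1 with h|h
        · exact absurd (show a = r by first | linear_combination h | linear_combination -h) har
        · exact h.symm
      · rcases hR1 with h|h
        · exact absurd (show r - 1 = r by first | linear_combination h | linear_combination -h) d1
        · exact absurd (show (2:ZMod m) = 0 by first | linear_combination h | linear_combination -h) h2
    subst ha'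
    have hu' : u = r - 2 := by
      rcases Hu with ⟨hL2, -⟩ | ⟨hR2, -⟩
      · rcases hL2 with h|h
        · first | linear_combination h | linear_combination -h
        · exact absurd (show r - 1 = u by first | linear_combination h | linear_combination -h) d3
      · rcases hR2 with h|h
        · exact absurd (show r = u by first | linear_combination h | linear_combination -h) d5
        · exact absurd (show r = u - 1 by first | linear_combination h | linear_combination -h) d4
    subst hu'
    rcases Hu1 with ⟨hL3, -⟩ | ⟨hR3, -⟩
    · rcases hL3 with h|h
      · exact h1 (by first | linear_combination h | linear_combination -h)
      · exact h2 (by first | linear_combination h | linear_combination -h)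
    · rcases hR3 with h|h
      · exact h3 (by first | linear_combination h | linear_combination -h)
      · exact h4 (by first | linear_combination h | linear_combination -h)

def loc : Fault m → ZMod m
  | .pre a => a | .mid a => a | .post a => a | .meas a => a

def locs : Fault m → ZMod m × ZMod m
  | .pre a => (a - 1, a) | .mid a => (a - 1, a) | .post a => (a - 1, a) | .meas a => (a, a)

lemma locs1_nonmeas (f : Fault m) (hf : f.isMeas = false) : (locs f).1 = loc f - 1 := by
  cases f <;> simp_all [locs, loc, Fault.isMeas]

lemma locs2_nonmeas (f : Fault m) (hf : f.isMeas = false) : (locs f).2 = loc f := by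
  cases f <;> simp_all [locs, loc, Fault.isMeas]

lemma locs_meas (f : Fault m) (hf : f.isMeas = true) : (locs f).1 = (locs f).2 := by
  cases f <;> simp_all [locs, Fault.isMeas]

lemma syn01 (f : Fault m) (j : ZMod m) : f.syn j = 0 ∨ f.syn j = 1 := by
  cases f <;> simp only [Fault.syn] <;> split_ifs <;> decide

lemma synIff (h1 : (1:ZMod m) ≠ 0) (f : Fault m) (j : ZMod m) :
    f.syn j = 1 ↔ (j = (locs f).1 ∨ j = (locs f).2) := by
  have key : ∀ a : ZMod m,
      (((if j = a - 1 then 1 else 0) + (if j = a then 1 else 0) : ZMod 2) = 1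
        ↔ (j = a - 1 ∨ j = a)) := by
    intro a
    have hne : a - 1 ≠ a := fun h => h1 (by linear_combination -h)
    by_cases hx : j = a - 1 <;> by_cases hy : j = a
    · exact absurd (hx.symm.trans hy) hne
    · rw [if_pos hx, if_neg hy]; simp [hx]
    · rw [if_neg hx, if_pos hy]; simp [hy]
    · rw [if_neg hx, if_neg hy]; simp [hx, hy]
  cases f with
  | pre a => simpa only [Fault.syn, locs] using key a
  | mid a => simpa only [Fault.syn, locs] using key a
  | post a => simpa only [Fault.syn, locs] using key a
  | meas a => by_cases hx : j = a <;> simp [Fault.syn, locs, hx]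

lemma dataErr_pair (f g : Fault m) (q : ZMod (2*m)) :
    dataErr {f, g} q = f.dataErr q + g.dataErr q := by
  simp [dataErr, Multiset.insert_eq_cons]

lemma synd_pair (f g : Fault m) (j : ZMod m) :
    synd {f, g} j = f.syn j + g.syn j := by
  simp [synd, Multiset.insert_eq_cons]

lemma synd_single (f : Fault m) (j : ZMod m) : synd {f} j = f.syn j := by
  simp [synd]

lemma resid (f : Fault m) (hf : f.isMeas = false) :
    ∃ x : ZMod (2*m), ∀ q, f.dataErr q + indic (d0 (loc f) + 1) q ≠ 0 → q = x := by
  cases f with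
  | pre a =>
    refine ⟨d0 a, fun q hq => ?_⟩
    by_contra h1
    apply hq
    dsimp only [loc]
    simp only [Fault.dataErr, indic, loc]
    rw [if_neg h1]
    by_cases h2 : q = d0 a + 1
    · rw [if_pos h2]; decide
    · rw [if_neg h2]; decide
  | mid a =>
    refine ⟨0, fun q hq => absurd ?_ hq⟩
    dsimp only [loc]
    simp only [Fault.dataErr, indic, loc]
    by_cases h2 : q = d0 a + 1
    · rw [if_pos h2]; decide
    · rw [if_neg h2]; decide
  | post a =>
    refine ⟨d0 a + 1, fun q hq => ?_⟩
    by_contra h1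
    apply hq
    simp [Fault.dataErr, indic, loc, h1]
  | meas a => simp [Fault.isMeas] at hf

lemma wt_le_two {n : ℕ} (h : ZMod n → ZMod 2) (x y : ZMod n)
    (H : ∀ q, h q ≠ 0 → q = x ∨ q = y) : wt h ≤ 2 := by
  have hsub : {i | h i ≠ 0} ⊆ {x, y} := fun i hi => H i hi
  refine le_trans (Set.ncard_le_ncard hsub (Set.toFinite _)) ?_
  refine le_trans (Set.ncard_insert_le _ _) ?_
  simp

end CutCat

open CutCat

/-- Four-triggered-stabilizers case of the proof of Theorem 2: if `w(F) ≤ 2`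
and the triggered stabilizers are exactly the four pairwise-distinct positions
`{r-1, r, u-1, u}`, then flipping data bits `2r+1` and `2u+1` leaves a
residual error of weight at most `w(F)`. -/
theorem cutcat_d5_four_triggered (m : ℕ) (hm : 5 ≤ m) (r u : ZMod m)
    (hdist : List.Pairwise (· ≠ ·) [r - 1, r, u - 1, u])
    (F : Multiset (CutCat.Fault m)) (hF : Multiset.card F ≤ 2)
    (hs : CutCat.suppSyn F = {r - 1, r, u - 1, u}) :
    CutCat.wt (CutCat.dataErr F + CutCat.indic (CutCat.d0 r + 1)
        + CutCat.indic (CutCat.d0 u + 1)) ≤ Multiset.card F := by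
  classical
  haveI : NeZero m := ⟨by omega⟩
  have hknat : ∀ k : ℕ, 0 < k → k < 5 → ((k : ZMod m) ≠ 0) := by
    intro k hk0 hk5 h
    rw [ZMod.natCast_eq_zero_iff] at h
    exact absurd (Nat.le_of_dvd hk0 h) (by omega)
  have h1 : (1:ZMod m) ≠ 0 := by simpa using hknat 1 one_pos (by norm_num)
  have h2 : (2:ZMod m) ≠ 0 := by simpa using hknat 2 (by norm_num) (by norm_num)
  have h3 : (3:ZMod m) ≠ 0 := by simpa using hknat 3 (by norm_num) (by norm_num)
  have h4 : (4:ZMod m) ≠ 0 := by simpa using hknat 4 (by norm_num) (by norm_num)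
  simp only [List.pairwise_cons, List.mem_cons, List.mem_singleton,
    List.not_mem_nil, forall_eq_or_imp, forall_eq] at hdist
  obtain ⟨⟨d1, d2, d3, -⟩, ⟨d4, d5, -⟩, ⟨d6, -⟩, -, -⟩ := hdist
  have hmem : ∀ j : ZMod m, synd F j = 1 ↔ (j = r - 1 ∨ j = r ∨ j = u - 1 ∨ j = u) := by
    intro j
    have := Set.ext_iff.mp hs j
    simpa [suppSyn, Set.mem_insert_iff] using this
  have hcard : Multiset.card F = 0 ∨ Multiset.card F = 1 ∨ Multiset.card F = 2 := by omega
  rcases hcard with hc | hc | hc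
  · exfalso
    rw [Multiset.card_eq_zero] at hc; subst hc
    have hr' := (hmem r).mpr (by tauto)
    rw [show synd (0 : Multiset (Fault m)) r = 0 from by simp [synd]] at hr'
    exact absurd hr' (by decide)
  · exfalso
    obtain ⟨f, rfl⟩ := Multiset.card_eq_one.mp hc
    have e1 : f.syn (r-1) = 1 := by rw [← synd_single]; exact (hmem _).mpr (by tauto)
    have e2 : f.syn r = 1 := by rw [← synd_single]; exact (hmem _).mpr (by tauto)
    have e3 : f.syn (u-1) = 1 := by rw [← synd_single]; exact (hmem _).mpr (by tauto)
    exact pigeon3 d1 d2 d4 ((synIff h1 f _).mp e1) ((synIff h1 f _).mp e2) ((synIff h1 f _).mp e3)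
  · obtain ⟨f, g, rfl⟩ := Multiset.card_eq_two.mp hc
    have hxor : ∀ j : ZMod m, (j = r - 1 ∨ j = r ∨ j = u - 1 ∨ j = u) →
        Xor' (j = (locs f).1 ∨ j = (locs f).2) (j = (locs g).1 ∨ j = (locs g).2) := by
      intro j hj
      have hsum : f.syn j + g.syn j = 1 := by rw [← synd_pair]; exact (hmem j).mpr hj
      have nf : f.syn j = 0 → ¬ (j = (locs f).1 ∨ j = (locs f).2) := fun h0 hd => by
        rw [(synIff h1 f j).mpr hd] at h0; exact absurd h0 (by decide)
      have ng : g.syn j = 0 → ¬ (j = (locs g).1 ∨ j = (locs g).2) := fun h0 hd => by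
        rw [(synIff h1 g j).mpr hd] at h0; exact absurd h0 (by decide)
      rcases syn01 f j with hf0 | hf1 <;> rcases syn01 g j with hg0 | hg1
      · rw [hf0, hg0] at hsum; exact absurd hsum (by decide)
      · exact Or.inr ⟨(synIff h1 g j).mp hg1, nf hf0⟩
      · exact Or.inl ⟨(synIff h1 f j).mp hf1, ng hg0⟩
      · rw [hf1, hg1] at hsum; exact absurd hsum (by decide)
    have X1 := hxor (r-1) (by tauto)
    have X2 := hxor r (by tauto)
    have X3 := hxor (u-1) (by tauto)
    have X4 := hxor u (by tauto)
    have hfm : f.isMeas = false := by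
      cases hfb : f.isMeas with
      | false => rfl
      | true =>
        exfalso
        have e := locs_meas f hfb
        have cv : ∀ j, Xor' (j = (locs f).1 ∨ j = (locs f).2) (j = (locs g).1 ∨ j = (locs g).2) →
            (j = (locs f).2 ∨ j = (locs g).1 ∨ j = (locs g).2) := by
          intro j hx
          rcases hx with ⟨h, -⟩ | ⟨h, -⟩
          · rcases h with h|h
            · exact Or.inl (e ▸ h)
            · exact Or.inl h
          · exact Or.inr h
        exact pigeon4 d1 d2 d3 d4 d5 d6 (cv _ X1) (cv _ X2) (cv _ X3) (cv _ X4)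
    have hgm : g.isMeas = false := by
      cases hgb : g.isMeas with
      | false => rfl
      | true =>
        exfalso
        have e := locs_meas g hgb
        have cv : ∀ j, Xor' (j = (locs f).1 ∨ j = (locs f).2) (j = (locs g).1 ∨ j = (locs g).2) →
            (j = (locs g).2 ∨ j = (locs f).1 ∨ j = (locs f).2) := by
          intro j hx
          rcases hx with ⟨h, -⟩ | ⟨h, -⟩
          · exact Or.inr h
          · rcases h with h|h
            · exact Or.inl (e ▸ h)
            · exact Or.inl h
        exact pigeon4 d1 d2 d3 d4 d5 d6 (cv _ X1) (cv _ X2) (cv _ X3) (cv _ X4)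
    rw [locs1_nonmeas f hfm, locs2_nonmeas f hfm, locs1_nonmeas g hgm, locs2_nonmeas g hgm]
      at X1 X2 X3 X4
    obtain ⟨x, hx⟩ := resid f hfm
    obtain ⟨y, hy⟩ := resid g hgm
    rcases keyNonMeas r u (loc f) (loc g) h1 h2 h3 h4 d1 d2 d3 d4 d5 d6 X1 X2 X3 X4 with
      ⟨ha, hb⟩ | ⟨ha, hb⟩
    · rw [ha] at hx; rw [hb] at hy
      refine le_trans (wt_le_two _ x y ?_) (le_of_eq hc.symm)
      intro q hq
      have expand : ((dataErr {f,g} + indic (d0 r + 1) + indic (d0 u + 1) : ZMod (2*m) → ZMod 2)) q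
          = (f.dataErr q + indic (d0 r + 1) q) + (g.dataErr q + indic (d0 u + 1) q) := by
        simp only [Pi.add_apply, dataErr_pair]; ring
      rw [expand] at hq
      by_cases hA : f.dataErr q + indic (d0 r + 1) q = 0
      · right
        apply hy q
        intro hB
        exact hq (by rw [hA, hB, add_zero])
      · left; exact hx q hA
    · rw [ha] at hx; rw [hb] at hy
      refine le_trans (wt_le_two _ x y ?_) (le_of_eq hc.symm)
      intro q hq
      have expand : ((dataErr {f,g} + indic (d0 r + 1) + indic (d0 u + 1) : ZMod (2*m) → ZMod 2)) q
          = (f.dataErr q + indic (d0 u + 1) q) + (g.dataErr q + indic (d0 r + 1) q) := by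
        simp only [Pi.add_apply, dataErr_pair]; ring
      rw [expand] at hq
      by_cases hA : f.dataErr q + indic (d0 u + 1) q = 0
      · right
        apply hy q
        intro hB
        exact hq (by rw [hA, hB, add_zero])
      · left; exact hx q hA
end
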